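/- arXiv:1301.4269 — 2 statements merged into one kernel-verified Lean document; each statement's English description precedes it below -/
import Mathlib

section
/- Let p > 5 be a prime and k a positive integer with k < p/4, and set D = ⌈2kp/(p−3)⌉. Then D < p, and for any D-APs A_1, …, A_k ⊆ Z_p, the sumset satisfies |Σ_{i=1}^k A_i| ≤ (p−1)/2. -/
/-!
A sum of arithmetic progressions with a common difference is again one, whose number of steps
is the total number of steps. A `D`-AP in `ℤ_p` takes at most `⌊(p − 1)/D⌋` steps, so the sumset
has at most `k ⌊(p − 1)/D⌋ + 1` elements, and `D ≥ 2kp/(p − 3)` makes this at most `(p − 1)/2`.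
That `D < p` comes from `2kp ≤ (p − 1)(p − 3)` for `4k < p` and `p ≥ 6`.
-/

open Pointwise

/-- The (maximal, no wrap-around) `D`-AP in `ℤ_p` with base `b`:
`{b, b + D, b + 2D, …, b + ⌊(p − 1 − b)/D⌋ · D} ⊆ ℤ_p`. -/
def dAP (p D b : ℕ) : Finset (ZMod p) :=
  (Finset.range ((p - 1 - b) / D + 1)).image (fun i => ((b + i * D : ℕ) : ZMod p))

open Finset

section ArithProg

variable {G : Type*} [AddCommMonoid G] [DecidableEq G]

/-- `{a, a + d, …, a + n • d}`: the index `n` counts steps, not terms. -/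
def arithProg (a d : G) (n : ℕ) : Finset G :=
  (range (n + 1)).image fun j => a + j • d

theorem card_arithProg_le (a d : G) (n : ℕ) : #(arithProg a d n) ≤ n + 1 :=
  card_image_le.trans (card_range _).le

theorem arithProg_add_subset (a b d : G) (m n : ℕ) :
    arithProg a d m + arithProg b d n ⊆ arithProg (a + b) d (m + n) := by
  intro _ h
  obtain ⟨_, hx, _, hy, rfl⟩ := mem_add.1 h
  obtain ⟨i, hi, rfl⟩ := mem_image.1 hx
  obtain ⟨j, hj, rfl⟩ := mem_image.1 hy
  rw [mem_range] at hi hj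
  refine mem_image.2 ⟨i + j, mem_range.2 (by omega), ?_⟩
  rw [add_smul]
  abel

theorem sum_arithProg_subset {ι : Type*} (s : Finset ι) (a : ι → G) (d : G) (n : ι → ℕ) :
    ∑ i ∈ s, arithProg (a i) d (n i) ⊆ arithProg (∑ i ∈ s, a i) d (∑ i ∈ s, n i) := by
  classical
  induction s using Finset.induction_on with
  | empty => simp [arithProg, ← singleton_zero]
  | insert i s hi ih =>
    simp only [sum_insert hi]
    exact (add_subset_add_left ih).trans (arithProg_add_subset _ _ _ _ _)

theorem card_sum_arithProg_le {ι : Type*} (s : Finset ι) (a : ι → G) (d : G) (n : ι → ℕ) :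
    #(∑ i ∈ s, arithProg (a i) d (n i)) ≤ ∑ i ∈ s, n i + 1 :=
  (card_le_card (sum_arithProg_subset s a d n)).trans (card_arithProg_le _ _ _)

end ArithProg

theorem dAP_eq_arithProg (p D b : ℕ) :
    dAP p D b = arithProg (b : ZMod p) D ((p - 1 - b) / D) := by
  simp only [dAP, arithProg, Nat.cast_add, Nat.cast_mul, nsmul_eq_mul]

theorem card_sum_dAP_le {ι : Type*} (s : Finset ι) (p D : ℕ) (b : ι → ℕ) :
    #(∑ i ∈ s, dAP p D (b i)) ≤ #s * ((p - 1) / D) + 1 := by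
  simp only [dAP_eq_arithProg]
  refine (card_sum_arithProg_le _ _ _ _).trans (Nat.add_le_add_right ?_ 1)
  exact sum_le_card_nsmul _ _ _ fun i _ => Nat.div_le_div_right (Nat.sub_le _ _)

section Ceil

variable {p k : ℕ}

theorem le_ceil_mul_sub_three (hp : 3 < p) :
    2 * k * p ≤ ⌈(2 * k * p : ℚ) / ((p : ℚ) - 3)⌉₊ * (p - 3) := by
  have hp3 : (0 : ℚ) < p - 3 := by
    rw [sub_pos]
    exact_mod_cast hp
  have h := (div_le_iff₀ hp3).1 (Nat.le_ceil ((2 * k * p : ℚ) / (p - 3)))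
  rw [← Nat.cast_le (α := ℚ)]
  push_cast [Nat.cast_sub hp.le]
  exact h

theorem ceil_lt_of_four_mul_lt (hp : 5 < p) (hkp : 4 * k < p) :
    ⌈(2 * k * p : ℚ) / ((p : ℚ) - 3)⌉₊ < p := by
  have hp' : (6 : ℚ) ≤ p := by exact_mod_cast hp
  have hkp' : 4 * (k : ℚ) + 1 ≤ p := by exact_mod_cast hkp
  refine Nat.lt_of_le_sub_one (by omega) (Nat.ceil_le.2 ?_)
  rw [Nat.cast_pred (by omega), div_le_iff₀ (by linarith)]
  nlinarith

end Ceil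

/-- Here `f` stands for `⌊(p − 1)/D⌋`, the number of steps a `D`-AP can take. -/
theorem mul_add_one_le_half {p k D f : ℕ} (hp : 3 ≤ p) (hk : 0 < k)
    (hkey : 2 * k * p ≤ D * (p - 3)) (hDf : D * f ≤ p - 1) :
    k * f + 1 ≤ (p - 1) / 2 := by
  obtain ⟨q, rfl⟩ : ∃ q, p = q + 3 := ⟨p - 3, by omega⟩
  have hD : 0 < D := Nat.pos_of_ne_zero fun h => by simp [h] at hkey; omega
  rw [Nat.le_div_iff_mul_le two_pos]
  refine Nat.le_of_mul_le_mul_left ?_ hD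
  have := Nat.mul_le_mul_left (2 * k) hDf
  rw [show q + 3 - 1 = q + 2 by omega, Nat.add_sub_cancel] at *
  nlinarith

theorem sumset_card_le_half_general (p : ℕ) (hp : 5 < p)
    (k : ℕ) (hk : 0 < k) (hkp : 4 * k < p)
    (D : ℕ) (hD : D = ⌈(2 * k * p : ℚ) / ((p : ℚ) - 3)⌉₊) :
    D < p ∧
    ∀ A : Fin k → Finset (ZMod p), (∀ i, ∃ b < D, A i = dAP p D b) →
      (∑ i, A i).card ≤ (p - 1) / 2 := by
  subst hD
  refine ⟨ceil_lt_of_four_mul_lt hp hkp, fun A hA => ?_⟩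
  choose b _ hAb using hA
  calc #(∑ i, A i) ≤ k * ((p - 1) / _) + 1 := by
        simpa only [hAb, card_univ, Fintype.card_fin] using card_sum_dAP_le univ p _ b
    _ ≤ (p - 1) / 2 :=
        mul_add_one_le_half (by omega) hk (le_ceil_mul_sub_three (by omega)) (Nat.mul_div_le _ _)

/-- For a prime `p > 5`, a positive integer `k < p/4`, and `D = ⌈2kp/(p − 3)⌉`:
`D < p`, and any `k` `D`-APs `A 1, …, A k ⊆ ℤ_p` satisfy
`|A 1 + ⋯ + A k| ≤ (p − 1)/2`. -/
theorem sumset_card_le_half (p : ℕ) [Fact p.Prime] (hp : 5 < p)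
    (k : ℕ) (hk : 0 < k) (hkp : 4 * k < p)
    (D : ℕ) (hD : D = ⌈(2 * k * p : ℚ) / ((p : ℚ) - 3)⌉₊) :
    D < p ∧
    ∀ A : Fin k → Finset (ZMod p), (∀ i, ∃ b < D, A i = dAP p D b) →
      (∑ i, A i).card ≤ (p - 1) / 2 :=
  sumset_card_le_half_general p hp k hk hkp D hD
end

section
/- There is a universal constant C such that for every prime p, every positive integer k, every ε ∈ (0,1), and every g ∈ Z_p, there exist a finite message set M with |M| ≤ C·k/ε, a finite randomness set R, encoding functions e_1, …, e_k : Z_p × R → M, and a decoder dec : M^k × R → {0,1} such that for all x_1, …, x_k ∈ Z_p: if x_1 + ⋯ + x_k = g in Z_p, then dec(e_1(x_1, r), …, e_k(x_k, r), r) = 1 for every r ∈ R; and if x_1 + ⋯ + x_k ≠ g in Z_p, then the fraction of r ∈ R for which dec(e_1(x_1, r), …, e_k(x_k, r), r) = 1 is at most ε. Consequently the total communication complexity k·⌈log_2 |M|⌉ is at most k·log_2(k/ε) + C'·k for a universal constant C'. -/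
/-!
Use a uniformly random multiplier `a ∈ (ℤ/p)ˣ` and `m ≈ 4k/ε`. Party `i` sends
`⌊m · val(a xᵢ) / p⌋ ∈ [0, m)`, so from the sum `S` of the messages the coordinator knows that
`m/p · Σ val(a xᵢ)` lies in `[S, S + k)`; it accepts when some natural lift `z` of `a g` has
`m z / p` in the same window. If `Σ xᵢ = g`, then `z = Σ val(a xᵢ)` is such a lift. Otherwise the
difference of the two lifts represents `a (Σ xᵢ - g)` and has absolute value below `kp/m`; as
`a ↦ a (Σ xᵢ - g)` is injective, at most `2kp/m ≤ εp/2` multipliers lead to acceptance.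
-/

open Finset

lemma Finset.sum_div_mul_le_sum {ι : Type*} (s : Finset ι) (f : ι → ℕ) (p : ℕ) :
    (∑ i ∈ s, f i / p) * p ≤ ∑ i ∈ s, f i := by
  rw [sum_mul]
  exact sum_le_sum fun i _ => Nat.div_mul_le_self (f i) p

lemma Finset.sum_lt_sum_div_add_card_mul {ι : Type*} {s : Finset ι} (hs : s.Nonempty)
    (f : ι → ℕ) {p : ℕ} (hp : 0 < p) : ∑ i ∈ s, f i < (∑ i ∈ s, f i / p + #s) * p := by
  calc ∑ i ∈ s, f i < ∑ i ∈ s, (f i / p * p + p) :=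
        sum_lt_sum_of_nonempty hs fun i _ => Nat.lt_div_mul_add hp
    _ = (∑ i ∈ s, f i / p + #s) * p := by rw [sum_add_distrib, sum_const, add_mul, sum_mul]; simp

namespace ZMod

lemma natAbs_valMinAbs_le_natAbs_of_intCast_eq {n : ℕ} [NeZero n] {a : ZMod n} {z : ℤ}
    (h : (z : ZMod n) = a) : a.valMinAbs.natAbs ≤ z.natAbs :=
  natAbs_min_of_le_div_two n _ z (by rw [coe_valMinAbs, h]) (natAbs_valMinAbs_le a)

lemma card_filter_ne_zero_natAbs_valMinAbs_le (n q : ℕ) [NeZero n] :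
    #{v : ZMod n | v ≠ 0 ∧ v.valMinAbs.natAbs ≤ q} ≤ 2 * q := by
  calc #{v : ZMod n | v ≠ 0 ∧ v.valMinAbs.natAbs ≤ q}
      ≤ #((Icc (-q : ℤ) q).erase 0) := by
        refine card_le_card_of_injOn valMinAbs (fun v hv => ?_) injective_valMinAbs.injOn
        simp only [coe_filter, mem_univ, true_and, Set.mem_ofPred_eq] at hv
        simp only [coe_erase, coe_Icc, Set.mem_sdiff, Set.mem_Icc, Set.mem_singleton_iff,
          valMinAbs_eq_zero]
        exact ⟨by omega, hv.1⟩
      _ = 2 * q := by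
        rw [card_erase_of_mem (by simp), Int.card_Icc]; omega

lemma card_units_filter_natAbs_valMinAbs_mul_le {p : ℕ} [Fact p.Prime] {d : ZMod p}
    (hd : d ≠ 0) (q : ℕ) : #{u : (ZMod p)ˣ | ((u : ZMod p) * d).valMinAbs.natAbs ≤ q} ≤ 2 * q := by
  refine (card_le_card_of_injOn (fun u : (ZMod p)ˣ => (u : ZMod p) * d) (fun u hu => ?_)
    (fun u _ v _ huv => Units.ext (mul_right_cancel₀ hd huv))).trans
    (card_filter_ne_zero_natAbs_valMinAbs_le p q)
  simp only [coe_filter, mem_univ, true_and, Set.mem_ofPred_eq] at hu ⊢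
  exact ⟨mul_ne_zero u.ne_zero hd, hu⟩

end ZMod

lemma Nat.clog_lt_logb_add_one (b n : ℕ) : (Nat.clog b n : ℝ) < Real.logb b n + 1 := by
  rw [← Real.natCeil_logb_natCast]
  exact Nat.ceil_lt_add_one (div_nonneg (Real.log_natCast_nonneg n) (Real.log_natCast_nonneg b))

lemma Nat.clog_two_le_logb_add_four {m : ℕ} (hm : 0 < m) {y : ℝ} (hy : m ≤ 8 * y) :
    (Nat.clog 2 m : ℝ) ≤ Real.logb 2 y + 4 := by
  have hm0 : (0 : ℝ) < m := by exact_mod_cast hm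
  have hy0 : 0 < y := by linarith
  have h8 : Real.logb 2 8 = 3 := by
    rw [show (8 : ℝ) = 2 ^ (3 : ℕ) by norm_num, Real.logb_pow, Real.logb_self_eq_one one_lt_two]
    norm_num
  have hlog := Real.logb_le_logb_of_le one_lt_two hm0 hy
  rw [Real.logb_mul (by norm_num) hy0.ne', h8] at hlog
  have hclog := Nat.clog_lt_logb_add_one 2 m
  push_cast at hclog
  linarith

namespace SumEqual

variable {p : ℕ}

def message [NeZero p] (m : ℕ) (a x : ZMod p) : ℕ := (a * x).val * m / p

lemma message_lt [NeZero p] {m : ℕ} (hm : 0 < m) (a x : ZMod p) : message m a x < m :=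
  (Nat.div_lt_iff_lt_mul (NeZero.pos p)).mpr <| by
    rw [mul_comm m]; exact Nat.mul_lt_mul_of_pos_right (ZMod.val_lt _) hm

def Accepts (k m : ℕ) (a g : ZMod p) (S : ℕ) : Prop :=
  ∃ z : ℕ, (z : ZMod p) = a * g ∧ S * p ≤ z * m ∧ z * m < (S + k) * p

variable [NeZero p] {k : ℕ} (m : ℕ) (a : ZMod p) (x : Fin k → ZMod p)

lemma sum_message_mul_le : (∑ i, message m a (x i)) * p ≤ (∑ i, (a * x i).val) * m :=
  (sum_div_mul_le_sum univ (fun i => (a * x i).val * m) p).trans_eq (sum_mul _ _ _).symm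

lemma sum_mul_lt_sum_message_add (hk : 0 < k) :
    (∑ i, (a * x i).val) * m < (∑ i, message m a (x i) + k) * p := by
  have : Nonempty (Fin k) := ⟨⟨0, hk⟩⟩
  rw [sum_mul]
  simpa only [card_univ, Fintype.card_fin, message] using
    sum_lt_sum_div_add_card_mul univ_nonempty (fun i => (a * x i).val * m) (NeZero.pos p)

lemma natCast_sum_val_mul : ((∑ i, (a * x i).val : ℕ) : ZMod p) = a * ∑ i, x i := by
  simp [mul_sum]

lemma accepts_of_sum_eq (hk : 0 < k) {g : ZMod p} (h : ∑ i, x i = g) :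
    Accepts k m a g (∑ i, message m a (x i)) :=
  ⟨_, by rw [natCast_sum_val_mul, h], sum_message_mul_le m a x,
    sum_mul_lt_sum_message_add m a x hk⟩

lemma natAbs_valMinAbs_mul_lt_of_accepts {g : ZMod p}
    (h : Accepts k m a g (∑ i, message m a (x i))) (hk : 0 < k) :
    (a * (∑ i, x i - g)).valMinAbs.natAbs * m < k * p := by
  obtain ⟨z, hz, hlo, hhi⟩ := h
  have hY₁ := sum_message_mul_le m a x
  have hY₂ := sum_mul_lt_sum_message_add m a x hk
  set Y := ∑ i, (a * x i).val
  have hcast : (((Y : ℤ) - z : ℤ) : ZMod p) = a * (∑ i, x i - g) := by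
    push_cast; rw [natCast_sum_val_mul, hz]; ring
  have hdist : ((Y : ℤ) - z).natAbs * m < k * p := by
    zify
    rw [← abs_of_nonneg (Nat.cast_nonneg (α := ℤ) m), ← abs_mul, sub_mul, abs_sub_lt_iff]
    constructor <;> linarith
  exact (Nat.mul_le_mul_right m
    (ZMod.natAbs_valMinAbs_le_natAbs_of_intCast_eq hcast)).trans_lt hdist

lemma card_accepts_mul_le [Fact p.Prime] (hk : 0 < k) (hm : 0 < m) {g : ZMod p}
    (hx : ∑ i, x i ≠ g)
    [DecidablePred fun u : (ZMod p)ˣ => Accepts k m u g (∑ i, message m u (x i))] :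
    #{u : (ZMod p)ˣ | Accepts k m u g (∑ i, message m u (x i))} * m ≤ 2 * k * p := by
  have hsub : #{u : (ZMod p)ˣ | Accepts k m u g (∑ i, message m u (x i))} ≤
      #{u : (ZMod p)ˣ | ((u : ZMod p) * (∑ i, x i - g)).valMinAbs.natAbs ≤ k * p / m} :=
    card_le_card <| monotone_filter_right _ fun u _ hu =>
      (Nat.le_div_iff_mul_le hm).mpr (natAbs_valMinAbs_mul_lt_of_accepts m _ x hu hk).le
  calc _ ≤ 2 * (k * p / m) * m := Nat.mul_le_mul_right m <|
        hsub.trans (ZMod.card_units_filter_natAbs_valMinAbs_mul_le (sub_ne_zero.mpr hx) _)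
    _ ≤ 2 * k * p := by
      rw [mul_assoc, mul_assoc]; exact Nat.mul_le_mul_left 2 (Nat.div_mul_le_self _ _)

lemma card_accepts_le [Fact p.Prime] (hk : 0 < k) (hm : 0 < m) {ε : ℝ} (hε : 0 < ε)
    (hεm : 4 * k ≤ ε * m) {g : ZMod p} (hx : ∑ i, x i ≠ g)
    [DecidablePred fun u : (ZMod p)ˣ => Accepts k m u g (∑ i, message m u (x i))] :
    (#{u : (ZMod p)ˣ | Accepts k m u g (∑ i, message m u (x i))} : ℝ) ≤ ε * (p - 1) := by
  have hcm := card_accepts_mul_le m x hk hm hx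
  generalize #{u : (ZMod p)ˣ | Accepts k m u g (∑ i, message m u (x i))} = c at hcm ⊢
  have hcm' : (c : ℝ) * m ≤ 2 * k * p := by exact_mod_cast hcm
  have hk0 : (0 : ℝ) < k := by exact_mod_cast hk
  have hp2 : (2 : ℝ) ≤ p := by exact_mod_cast (Fact.out : p.Prime).two_le
  nlinarith [mul_le_mul_of_nonneg_left hεm (Nat.cast_nonneg c : (0 : ℝ) ≤ c),
    mul_le_mul_of_nonneg_left hcm' hε.le, mul_nonneg (mul_nonneg hε.le hk0.le) (sub_nonneg.mpr hp2)]

end SumEqual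

lemma four_mul_le_mul_ceil_four_mul_div {ε : ℝ} (hε : 0 < ε) (k : ℝ) : 4 * k ≤ ε * ⌈4 * k / ε⌉₊ :=
  (div_le_iff₀' hε).mp (Nat.le_ceil _)

lemma ceil_four_mul_div_le_five_mul_div {ε k : ℝ} (hε : 0 < ε) (hε1 : ε ≤ 1) (hk : 1 ≤ k) :
    (⌈4 * k / ε⌉₊ : ℝ) ≤ 5 * k / ε := by
  refine (Nat.ceil_lt_add_one (by positivity)).le.trans ?_
  rw [div_add_one hε.ne', div_le_div_iff_of_pos_right hε]
  linarith

open SumEqual in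
/-- There is a universal constant `C` such that for every prime `p`, every
`k ≥ 1`, every `ε ∈ (0,1)`, and every `g ∈ ℤ_p`, there is a one-round `k`-party
public-randomness protocol (randomness set `R`, encoders
`e_i : ℤ_p × R → M`, decoder `dec : M^k × R → {0,1}`) with message set `M` of
size at most `C·k/ε` computing Sum-Equal relative to `g` with one-sided error
at most `ε`; consequently its total communication `k·⌈log₂ |M|⌉` is at most
`k·log₂(k/ε) + C'·k` for a universal constant `C'`. -/
theorem sumEqual_upper_bound :
    ∃ (C C' : ℝ), 0 < C ∧
      ∀ (p : ℕ), p.Prime → ∀ (k : ℕ), 0 < k → ∀ ε : ℝ, 0 < ε → ε < 1 →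
        ∀ g : ZMod p,
        ∃ (m R : ℕ) (e : Fin k → ZMod p → Fin R → Fin m)
          (dec : (Fin k → Fin m) → Fin R → Fin 2),
          0 < m ∧ 0 < R ∧ (m : ℝ) ≤ C * k / ε ∧
          (∀ x : Fin k → ZMod p,
            ((∑ i, x i) = g → ∀ r, dec (fun i => e i (x i) r) r = 1) ∧
            ((∑ i, x i) ≠ g →
              ((Finset.univ.filter
                  (fun r : Fin R => dec (fun i => e i (x i) r) r = 1)).card : ℝ)
                ≤ ε * R)) ∧
          ((k * Nat.clog 2 m : ℕ) : ℝ) ≤ k * Real.logb 2 ((k : ℝ) / ε) + C' * k := by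
  classical
  refine ⟨5, 4, by norm_num, fun p hp k hk ε hε hε1 g => ?_⟩
  have : Fact p.Prime := ⟨hp⟩
  have hk1 : (1 : ℝ) ≤ k := by exact_mod_cast hk
  have hεm := four_mul_le_mul_ceil_four_mul_div hε k
  have hm5 := ceil_four_mul_div_le_five_mul_div hε hε1.le hk1
  set m := ⌈4 * (k : ℝ) / ε⌉₊
  have hm : 0 < m := Nat.pos_of_ne_zero fun h => by
    rw [h, Nat.cast_zero, mul_zero] at hεm; linarith
  let σ := (Fintype.equivFin (ZMod p)ˣ).symm
  refine ⟨m, Fintype.card (ZMod p)ˣ, fun _ x r => ⟨message m (σ r : ZMod p) x, message_lt hm _ _⟩,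
    fun s r => if Accepts k m (σ r : ZMod p) g (∑ i, (s i : ℕ)) then 1 else 0,
    hm, Fintype.card_pos, hm5, fun x => ⟨fun hx r => ?_, fun hx => ?_⟩, ?_⟩
  · simp [accepts_of_sum_eq m _ x hk hx]
  · calc _ ≤ (#{u : (ZMod p)ˣ | Accepts k m u g (∑ i, message m u (x i))} : ℝ) :=
          Nat.cast_le.mpr <| card_le_card_of_injOn σ (fun r hr => by simpa using hr)
            σ.injective.injOn
      _ ≤ ε * (p - 1) := card_accepts_le m x hk hm hε hεm hx
      _ = ε * Fintype.card (ZMod p)ˣ := by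
          rw [ZMod.card_units, Nat.cast_sub hp.one_le, Nat.cast_one]
  · have hclog := Nat.clog_two_le_logb_add_four hm (y := k / ε)
      (by linarith [mul_div_assoc (5 : ℝ) k ε])
    push_cast
    nlinarith
end
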